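/- Let Γ be a blue curve that is ⪯-maximal among all borders, let Γ̄ be its mirror curve, and let H consist of Γ̄(0) together with all blue points lying to the right of Γ̄(0) in π^0. Then for every i with 1 ≤ i ≤ |H| and every t with 0 ≤ t < C(n,2), if the weight of H_i is δ−1 at time t and δ at time t+1, then τ_{t+1} is a balanced transposition that swaps a point of H with a red point, moves the point of H to the left, and has exactly i−1 points of H strictly to the left of the transposed pair in π^t. -/

import Mathlib

open Finset

/-- An allowable sequence on `n` points (the points are the elements of `Fin n`).
`pos t x` is the position (from left to right, `0`-based) of point `x`
in the linear ordering `π^t`. -/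
structure AllowableSeq (n : ℕ) where
  pos : ℤ → Equiv.Perm (Fin n)
  adj : ∀ t : ℤ, ∃ p q : Fin n,
    ((pos t q : ℕ) = (pos t p : ℕ) + 1) ∧
    pos (t + 1) = (Equiv.swap p q).trans (pos t)
  rev : ∀ t : ℤ, pos (t + (n.choose 2 : ℤ)) = (pos t).trans Fin.revPerm

namespace AllowableSeq

variable {n : ℕ}

/-- The weight of a point: `+1` for blue, `-1` for red. -/
def wt (blue : Fin n → Bool) (x : Fin n) : ℤ := if blue x then 1 else -1

/-- The transposition `τ_{t+1}` (leading from `π^t` to `π^{t+1}`) swaps the points `p` and `q`. -/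
def SwapsAt (A : AllowableSeq n) (t : ℤ) (p q : Fin n) : Prop :=
  p ≠ q ∧ A.pos (t + 1) = (Equiv.swap p q).trans (A.pos t)

/-- `τ_{t+1}` is a balanced transposition swapping `p` and `q`: one of them is blue and the
other red, and the total weight of the points strictly to the left of the adjacent
pair in `π^t` equals `δ`. -/
def BalancedSwap (A : AllowableSeq n) (blue : Fin n → Bool) (δ : ℤ) (t : ℤ)
    (p q : Fin n) : Prop :=
  A.SwapsAt t p q ∧ (blue p ↔ ¬ blue q) ∧
  (∑ x : Fin n, if (A.pos t x : ℕ) < min (A.pos t p : ℕ) (A.pos t q : ℕ)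
      then wt blue x else 0) = δ

/-- The set of unordered pairs of points swapped by some balanced transposition of the
allowable sequence; its cardinality is the number of distinct balanced transpositions. -/
def balancedPairs (A : AllowableSeq n) (blue : Fin n → Bool) (δ : ℤ) : Set (Sym2 (Fin n)) :=
  { s | ∃ p q t, s = s(p, q) ∧ A.BalancedSwap blue δ t p q }

/-- A curve: a map `ℤ → Fin n` that is periodic with period `2 * C(n,2)`. -/
def IsCurve (A : AllowableSeq n) (γ : ℤ → Fin n) : Prop :=
  ∀ t : ℤ, γ (t + 2 * (n.choose 2 : ℤ)) = γ t

/-- The weight of a curve `γ` at time `t`: the sum of the weights of the points lying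
strictly to the left of `γ t` in `π^t`. -/
def cweight (A : AllowableSeq n) (blue : Fin n → Bool) (γ : ℤ → Fin n) (t : ℤ) : ℤ :=
  ∑ x : Fin n, if A.pos t x < A.pos t (γ t) then wt blue x else 0

/-- `γ` is the curve `Q_k` (with `k` 1-based): at every time `t`, `γ t` is the `k`-th point
of `Q` from left to right in `π^t`, i.e. `γ t ∈ Q` and exactly `k - 1` points of `Q` lie
strictly to the left of `γ t`. -/
def IsKth (A : AllowableSeq n) (Q : Finset (Fin n)) (k : ℕ) (γ : ℤ → Fin n) : Prop :=
  ∀ t : ℤ, γ t ∈ Q ∧ (Q.filter (fun x => A.pos t x < A.pos t (γ t))).card = k - 1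

/-- The mirror curve `γ̄` of `γ`, defined by `γ̄ (t + C(n,2)) = γ t`. -/
def mirror (γ : ℤ → Fin n) : ℤ → Fin n := fun t => γ (t - (n.choose 2 : ℤ))

/-- A border: a curve that is either blue and `≥δ` or red and `≤δ`, such that
(I) consecutive values are equal or have no point of the same colour between them, and
(II) it lies strictly to the left of its mirror curve. -/
def IsBorder (A : AllowableSeq n) (blue : Fin n → Bool) (δ : ℤ) (γ : ℤ → Fin n) : Prop :=
  A.IsCurve γ ∧
  (∀ t : ℤ, A.pos t (γ t) < A.pos t (mirror γ t)) ∧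
  (((∀ t : ℤ, blue (γ t) = true) ∧ (∀ t : ℤ, δ ≤ A.cweight blue γ t) ∧
      ∀ t : ℤ, γ (t + 1) = γ t ∨ ∀ x : Fin n, blue x = true →
        ¬ (min (A.pos (t+1) (γ t)) (A.pos (t+1) (γ (t+1))) < A.pos (t+1) x ∧
           A.pos (t+1) x < max (A.pos (t+1) (γ t)) (A.pos (t+1) (γ (t+1)))))
   ∨ ((∀ t : ℤ, blue (γ t) = false) ∧ (∀ t : ℤ, A.cweight blue γ t ≤ δ) ∧
      ∀ t : ℤ, γ (t + 1) = γ t ∨ ∀ x : Fin n, blue x = false →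
        ¬ (min (A.pos (t+1) (γ t)) (A.pos (t+1) (γ (t+1))) < A.pos (t+1) x ∧
           A.pos (t+1) x < max (A.pos (t+1) (γ t)) (A.pos (t+1) (γ (t+1))))))

/-- `Γ` is `⪯`-maximal among all borders: it is a border and no border lies strictly
to its right. -/
def IsMaxBorder (A : AllowableSeq n) (blue : Fin n → Bool) (δ : ℤ) (Γ : ℤ → Fin n) : Prop :=
  A.IsBorder blue δ Γ ∧
  ∀ γ : ℤ → Fin n, A.IsBorder blue δ γ → ¬ (∀ t : ℤ, A.pos t (Γ t) < A.pos t (γ t))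

/-- The curve `α` has the weight change `a ⇝ b` between the curves `lo` and `hi`:
at some time `t` its weight changes from `a` to `b`, the change occurring to the right
of `lo` and to the left of `hi`. -/
def HasChangeBetween (A : AllowableSeq n) (blue : Fin n → Bool) (a b : ℤ)
    (α lo hi : ℤ → Fin n) : Prop :=
  ∃ t : ℤ, A.cweight blue α t = a ∧ A.cweight blue α (t+1) = b ∧
    A.pos t (lo t) ≤ A.pos t (α t) ∧ A.pos (t+1) (lo (t+1)) < A.pos (t+1) (α (t+1)) ∧
    A.pos t (α t) ≤ A.pos t (hi t) ∧ A.pos (t+1) (α (t+1)) < A.pos (t+1) (hi (t+1))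

/-- The number of blue points strictly to the left of the adjacent pair `p, q` in `π^t`. -/
def blueLeftPair (A : AllowableSeq n) (blue : Fin n → Bool) (t : ℤ) (p q : Fin n) : ℕ :=
  (Finset.univ.filter (fun y => blue y = true ∧
    (A.pos t y : ℕ) < min (A.pos t p : ℕ) (A.pos t q : ℕ))).card

end AllowableSeq

/-!
A transposition changes the weight of the curve `H_k` only if it moves `H_k` past a neighbour
outside `H`, which makes the weight jump by the weight of that neighbour. If `H_k` moved
right past a blue point `x ∉ H`, then `x` was left of `Γ̄(0)`, hence of `H_k`, at time `0`; so
the pair would have been exchanged twice in the half-period `[0, C(n,2))`, which never happens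
in an allowable sequence. So `H_k` moves left past a red point, and the weights `δ - 1` and `δ`
before and after the step say that the weight to the left of the pair is `δ`.
-/

namespace AllowableSeq

variable {n : ℕ} (A : AllowableSeq n)

/-- `τ_{s+1}` exchanges `swapLeft s` and `swapRight s`, which are adjacent in this order in
`π^s`. -/
noncomputable def swapLeft (s : ℤ) : Fin n := (A.adj s).choose

noncomputable def swapRight (s : ℤ) : Fin n := (A.adj s).choose_spec.choose

noncomputable def swapPair (s : ℤ) : Sym2 (Fin n) := s(A.swapLeft s, A.swapRight s)

lemma val_pos_swapRight (s : ℤ) :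
    (A.pos s (A.swapRight s) : ℕ) = A.pos s (A.swapLeft s) + 1 :=
  (A.adj s).choose_spec.choose_spec.1

lemma pos_succ (s : ℤ) :
    A.pos (s + 1) = (Equiv.swap (A.swapLeft s) (A.swapRight s)).trans (A.pos s) :=
  (A.adj s).choose_spec.choose_spec.2

lemma val_pos_inj {s : ℤ} {x y : Fin n} : (A.pos s x : ℕ) = A.pos s y ↔ x = y :=
  Fin.val_inj.trans (A.pos s).injective.eq_iff

lemma swapLeft_ne_swapRight (s : ℤ) : A.swapLeft s ≠ A.swapRight s := by
  intro h
  have := A.val_pos_swapRight s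
  rw [h] at this
  omega

lemma swapsAt_swapRight_swapLeft (s : ℤ) : A.SwapsAt s (A.swapRight s) (A.swapLeft s) :=
  ⟨(A.swapLeft_ne_swapRight s).symm, by rw [Equiv.swap_comm]; exact A.pos_succ s⟩

lemma val_pos_succ (s : ℤ) (x : Fin n) :
    (A.pos (s + 1) x : ℕ) =
      if (A.pos s x : ℕ) = A.pos s (A.swapLeft s) then (A.pos s (A.swapLeft s) : ℕ) + 1
      else if (A.pos s x : ℕ) = A.pos s (A.swapLeft s) + 1 then (A.pos s (A.swapLeft s) : ℕ)
      else A.pos s x := by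
  simp only [← A.val_pos_swapRight, A.val_pos_inj, A.pos_succ, Equiv.trans_apply,
    Equiv.swap_apply_def]
  split_ifs <;> rfl

lemma pos_succ_lt_pos_succ_iff {s : ℤ} {u v : Fin n} (h : s(u, v) ≠ A.swapPair s) :
    A.pos (s + 1) u < A.pos (s + 1) v ↔ A.pos s u < A.pos s v := by
  simp only [swapPair, ne_eq, Sym2.eq_iff, not_or, not_and, ← A.val_pos_inj (s := s),
    A.val_pos_swapRight] at h
  rw [Fin.lt_def, Fin.lt_def, A.val_pos_succ, A.val_pos_succ]
  split_ifs <;> omega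

lemma exists_swapPair_of_lt_iff_ne {u v : Fin n} {a : ℤ} (d : ℕ)
    (h : ¬(A.pos a u < A.pos a v ↔ A.pos (a + d) u < A.pos (a + d) v)) :
    ∃ s, a ≤ s ∧ s < a + d ∧ A.swapPair s = s(u, v) := by
  induction d with
  | zero => simp at h
  | succ d ih =>
    by_cases hd : A.pos a u < A.pos a v ↔ A.pos (a + d) u < A.pos (a + d) v
    · refine ⟨a + d, by omega, by push_cast; omega, ?_⟩
      by_contra hne
      have hstep := A.pos_succ_lt_pos_succ_iff (Ne.symm hne)
      push_cast at h
      rw [← add_assoc] at h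
      exact h (hd.trans hstep.symm)
    · obtain ⟨s, has, hsd, hs⟩ := ih hd
      exact ⟨s, has, by push_cast; omega, hs⟩

/-- Since `π^{C(n,2)}` reverses `π^0`, each of the `C(n,2)` pairs is exchanged during the
`C(n,2)` steps of `[0, C(n,2))`; hence none is exchanged twice. -/
lemma injOn_swapPair : Set.InjOn A.swapPair (Finset.Ico (0 : ℤ) (n.choose 2)) := by
  classical
  have hmaps : ∀ s ∈ Finset.Ico (0 : ℤ) (n.choose 2),
      A.swapPair s ∈ Finset.univ.filter (fun z : Sym2 (Fin n) => ¬ z.IsDiag) := fun s _ =>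
    Finset.mem_filter.mpr ⟨Finset.mem_univ _,
      fun hd => A.swapLeft_ne_swapRight s (Sym2.mk_isDiag_iff.mp hd)⟩
  have hsurj : ∀ z ∈ Finset.univ.filter (fun z : Sym2 (Fin n) => ¬ z.IsDiag),
      ∃ s, ∃ _ : s ∈ Finset.Ico (0 : ℤ) (n.choose 2), A.swapPair s = z := by
    intro z hz
    induction z using Sym2.ind with
    | _ u v =>
      have huv : A.pos 0 u ≠ A.pos 0 v := fun h =>
        (Finset.mem_filter.mp hz).2 (Sym2.mk_isDiag_iff.mpr ((A.pos 0).injective h))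
      have hrev : ¬(A.pos 0 u < A.pos 0 v ↔
          A.pos (0 + (n.choose 2 : ℕ)) u < A.pos (0 + (n.choose 2 : ℕ)) v) := by
        rw [A.rev 0]
        simp only [Equiv.trans_apply, Fin.revPerm_apply, Fin.rev_lt_rev]
        omega
      obtain ⟨s, hs0, hsN, hs⟩ := A.exists_swapPair_of_lt_iff_ne _ hrev
      exact ⟨s, Finset.mem_Ico.mpr ⟨hs0, by simpa using hsN⟩, hs⟩
  have hcard : (Finset.Ico (0 : ℤ) (n.choose 2)).card ≤
      (Finset.univ.filter (fun z : Sym2 (Fin n) => ¬ z.IsDiag)).card := by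
    rw [Int.card_Ico, ← Fintype.card_subtype, Sym2.card_subtype_not_diag, Fintype.card_fin]
    simp
  intro s₁ hs₁ s₂ hs₂ h
  exact Finset.inj_on_of_surj_on_of_card_le (fun s _ => A.swapPair s) hmaps hsurj hcard
    hs₁ hs₂ h

lemma pos_zero_swapLeft_lt {t : ℤ} (ht0 : 0 ≤ t) (htN : t < n.choose 2) :
    A.pos 0 (A.swapLeft t) < A.pos 0 (A.swapRight t) := by
  by_contra hge
  have hflip : ¬(A.pos 0 (A.swapLeft t) < A.pos 0 (A.swapRight t) ↔
      A.pos (0 + t.toNat) (A.swapLeft t) < A.pos (0 + t.toNat) (A.swapRight t)) := by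
    rw [zero_add, Int.toNat_of_nonneg ht0, Fin.lt_def (a := A.pos t _), A.val_pos_swapRight]
    simp [hge]
  obtain ⟨s, hs0, hst, hs⟩ := A.exists_swapPair_of_lt_iff_ne _ hflip
  have := A.injOn_swapPair (Finset.mem_Ico.mpr ⟨hs0, by omega⟩)
    (Finset.mem_Ico.mpr ⟨ht0, htN⟩) hs
  omega

def leftOf (s : ℤ) (y : Fin n) : Finset (Fin n) :=
  Finset.univ.filter fun x => A.pos s x < A.pos s y

@[simp]
lemma mem_leftOf {s : ℤ} {x y : Fin n} : x ∈ A.leftOf s y ↔ A.pos s x < A.pos s y := by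
  simp [leftOf]

lemma filter_pos_lt_eq_inter_leftOf (H : Finset (Fin n)) (s : ℤ) (y : Fin n) :
    H.filter (fun x => A.pos s x < A.pos s y) = H ∩ A.leftOf s y := by
  ext; simp

lemma filter_val_pos_lt_eq_inter_leftOf (H : Finset (Fin n)) (s : ℤ) (y : Fin n) :
    H.filter (fun x => (A.pos s x : ℕ) < A.pos s y) = H ∩ A.leftOf s y := by
  ext; simp only [Finset.mem_filter, Finset.mem_inter, mem_leftOf, Fin.lt_def]

lemma sum_leftOf_eq_sum_ite {M : Type*} [AddCommMonoid M] (f : Fin n → M) (s : ℤ) (y : Fin n) :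
    ∑ x ∈ A.leftOf s y, f x = ∑ x, if (A.pos s x : ℕ) < A.pos s y then f x else 0 := by
  rw [leftOf, Finset.sum_filter]; simp only [Fin.lt_def]

lemma cweight_eq_sum_leftOf (blue : Fin n → Bool) (γ : ℤ → Fin n) (s : ℤ) :
    A.cweight blue γ s = ∑ x ∈ A.leftOf s (γ s), wt blue x := by
  rw [leftOf, Finset.sum_filter]; rfl

lemma swapLeft_notMem_leftOf_swapLeft (s : ℤ) : A.swapLeft s ∉ A.leftOf s (A.swapLeft s) := by
  simp

lemma swapRight_notMem_leftOf_swapLeft (s : ℤ) : A.swapRight s ∉ A.leftOf s (A.swapLeft s) := by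
  simp [Fin.lt_def, A.val_pos_swapRight]

lemma leftOf_swapRight (s : ℤ) :
    A.leftOf s (A.swapRight s) = insert (A.swapLeft s) (A.leftOf s (A.swapLeft s)) := by
  ext x
  simp only [mem_leftOf, Finset.mem_insert, Fin.lt_def, A.val_pos_swapRight,
    ← A.val_pos_inj (s := s) (x := x)]
  omega

lemma leftOf_succ_of_ne {s : ℤ} {y : Fin n} (hl : y ≠ A.swapLeft s) (hr : y ≠ A.swapRight s) :
    A.leftOf (s + 1) y = A.leftOf s y := by
  ext x
  refine A.mem_leftOf.trans ((A.pos_succ_lt_pos_succ_iff ?_).trans A.mem_leftOf.symm)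
  simp only [swapPair, ne_eq, Sym2.eq_iff, not_or, not_and]
  exact ⟨fun _ => hr, fun _ => hl⟩

lemma leftOf_succ_swapLeft (s : ℤ) :
    A.leftOf (s + 1) (A.swapLeft s) = insert (A.swapRight s) (A.leftOf s (A.swapLeft s)) := by
  ext x
  have hr := A.val_pos_swapRight s
  simp only [mem_leftOf, Finset.mem_insert, Fin.lt_def, A.val_pos_succ, ← hr,
    ← A.val_pos_inj (s := s) (x := x)]
  split_ifs <;> omega

lemma leftOf_succ_swapRight (s : ℤ) :
    A.leftOf (s + 1) (A.swapRight s) = A.leftOf s (A.swapLeft s) := by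
  ext x
  have hr := A.val_pos_swapRight s
  simp only [mem_leftOf, Fin.lt_def, A.val_pos_succ, hr]
  split_ifs <;> omega

lemma card_inter_leftOf_lt {H : Finset (Fin n)} {s : ℤ} {y z : Fin n} (hy : y ∈ H)
    (hyz : A.pos s y < A.pos s z) : (H ∩ A.leftOf s y).card < (H ∩ A.leftOf s z).card := by
  refine Finset.card_lt_card ((Finset.ssubset_iff_of_subset ?_).mpr ⟨y, ?_, ?_⟩)
  · exact Finset.inter_subset_inter_left fun x hx => by
      simpa using (A.mem_leftOf.mp hx).trans hyz
  · simpa [hy] using hyz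
  · simp

lemma eq_of_card_inter_leftOf_eq {H : Finset (Fin n)} {s : ℤ} {y z : Fin n} (hy : y ∈ H)
    (hz : z ∈ H) (h : (H ∩ A.leftOf s y).card = (H ∩ A.leftOf s z).card) : y = z := by
  rcases lt_trichotomy (A.pos s y) (A.pos s z) with hlt | heq | hgt
  · exact absurd h (A.card_inter_leftOf_lt hy hlt).ne
  · exact (A.pos s).injective heq
  · exact absurd h (A.card_inter_leftOf_lt hz hgt).ne'

section Rank

variable {A} {blue : Fin n → Bool} {H : Finset (Fin n)} {k : ℕ} {γ : ℤ → Fin n} {t : ℤ}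

namespace IsKth

lemma apply_succ_eq (hγ : A.IsKth H k γ) {s : ℤ} {y : Fin n} (hy : y ∈ H)
    (h : (H ∩ A.leftOf (s + 1) y).card = (H ∩ A.leftOf s (γ s)).card) : γ (s + 1) = y := by
  refine A.eq_of_card_inter_leftOf_eq (s := s + 1) (hγ (s + 1)).1 hy ?_
  rw [h, ← filter_pos_lt_eq_inter_leftOf, ← filter_pos_lt_eq_inter_leftOf, (hγ s).2,
    (hγ (s + 1)).2]

lemma cweight_succ_of_ne (hγ : A.IsKth H k γ) (hl : γ t ≠ A.swapLeft t)
    (hr : γ t ≠ A.swapRight t) :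
    A.cweight blue γ (t + 1) = A.cweight blue γ t := by
  have hstay : γ (t + 1) = γ t :=
    hγ.apply_succ_eq (hγ t).1 (by rw [A.leftOf_succ_of_ne hl hr])
  rw [cweight_eq_sum_leftOf, cweight_eq_sum_leftOf, hstay, A.leftOf_succ_of_ne hl hr]

lemma cweight_succ_of_eq_swapLeft_of_mem (hγ : A.IsKth H k γ) (hl : γ t = A.swapLeft t)
    (hrH : A.swapRight t ∈ H) :
    A.cweight blue γ (t + 1) = A.cweight blue γ t := by
  have hnext : γ (t + 1) = A.swapRight t :=
    hγ.apply_succ_eq hrH (by rw [A.leftOf_succ_swapRight, hl])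
  rw [cweight_eq_sum_leftOf, cweight_eq_sum_leftOf, hnext, hl, A.leftOf_succ_swapRight]

lemma cweight_succ_of_eq_swapRight_of_mem (hγ : A.IsKth H k γ) (hr : γ t = A.swapRight t)
    (hlH : A.swapLeft t ∈ H) (hrH : A.swapRight t ∈ H)
    (hw : wt blue (A.swapLeft t) = wt blue (A.swapRight t)) :
    A.cweight blue γ (t + 1) = A.cweight blue γ t := by
  classical
  have hnext : γ (t + 1) = A.swapLeft t := by
    refine hγ.apply_succ_eq hlH ?_
    rw [hr, A.leftOf_succ_swapLeft, A.leftOf_swapRight, Finset.inter_insert_of_mem hrH,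
      Finset.inter_insert_of_mem hlH,
      Finset.card_insert_of_notMem (fun h => A.swapRight_notMem_leftOf_swapLeft t
        (Finset.mem_inter.mp h).2),
      Finset.card_insert_of_notMem (fun h => A.swapLeft_notMem_leftOf_swapLeft t
        (Finset.mem_inter.mp h).2)]
  rw [cweight_eq_sum_leftOf, cweight_eq_sum_leftOf, hnext, hr, A.leftOf_succ_swapLeft,
    A.leftOf_swapRight, Finset.sum_insert (A.swapRight_notMem_leftOf_swapLeft t),
    Finset.sum_insert (A.swapLeft_notMem_leftOf_swapLeft t), hw]

lemma cweight_succ_of_eq_swapLeft_of_notMem (hγ : A.IsKth H k γ) (hl : γ t = A.swapLeft t)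
    (hrH : A.swapRight t ∉ H) :
    A.cweight blue γ (t + 1) = A.cweight blue γ t + wt blue (A.swapRight t) := by
  classical
  have hnext : γ (t + 1) = A.swapLeft t := by
    refine hγ.apply_succ_eq ((hl ▸ hγ t).1) ?_
    rw [hl, A.leftOf_succ_swapLeft, Finset.inter_insert_of_notMem hrH]
  rw [cweight_eq_sum_leftOf, cweight_eq_sum_leftOf, hnext, hl, A.leftOf_succ_swapLeft,
    Finset.sum_insert (A.swapRight_notMem_leftOf_swapLeft t), add_comm]

lemma cweight_succ_of_eq_swapRight_of_notMem (hγ : A.IsKth H k γ) (hr : γ t = A.swapRight t)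
    (hlH : A.swapLeft t ∉ H) :
    A.cweight blue γ (t + 1) + wt blue (A.swapLeft t) = A.cweight blue γ t := by
  classical
  have hnext : γ (t + 1) = A.swapRight t := by
    refine hγ.apply_succ_eq ((hr ▸ hγ t).1) ?_
    rw [hr, A.leftOf_succ_swapRight, A.leftOf_swapRight, Finset.inter_insert_of_notMem hlH]
  rw [cweight_eq_sum_leftOf, cweight_eq_sum_leftOf, hnext, hr, A.leftOf_succ_swapRight,
    A.leftOf_swapRight, Finset.sum_insert (A.swapLeft_notMem_leftOf_swapLeft t), add_comm]

lemma card_inter_leftOf_swapLeft (hγ : A.IsKth H k γ) (hr : γ t = A.swapRight t)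
    (hlH : A.swapLeft t ∉ H) :
    (H ∩ A.leftOf t (A.swapLeft t)).card = k - 1 := by
  classical
  rw [← Finset.inter_insert_of_notMem hlH, ← A.leftOf_swapRight, ← hr,
    ← filter_pos_lt_eq_inter_leftOf, (hγ t).2]

lemma swap_of_cweight_succ_eq_add_one (hγ : A.IsKth H k γ) (hHblue : ∀ y ∈ H, blue y = true)
    (h : A.cweight blue γ (t + 1) = A.cweight blue γ t + 1) :
    (γ t = A.swapLeft t ∧ A.swapRight t ∉ H ∧ blue (A.swapRight t) = true) ∨
      (γ t = A.swapRight t ∧ A.swapLeft t ∉ H ∧ blue (A.swapLeft t) = false) := by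
  have hγH := (hγ t).1
  by_cases hl : γ t = A.swapLeft t
  · have hrH : A.swapRight t ∉ H := fun hrH => by
      have := hγ.cweight_succ_of_eq_swapLeft_of_mem hl hrH (blue := blue)
      omega
    have hw := hγ.cweight_succ_of_eq_swapLeft_of_notMem hl hrH (blue := blue)
    refine Or.inl ⟨hl, hrH, ?_⟩
    unfold wt at hw
    split_ifs at hw with hb
    · exact hb
    · omega
  by_cases hr : γ t = A.swapRight t
  · have hlH : A.swapLeft t ∉ H := fun hlH => by
      have hw : wt blue (A.swapLeft t) = wt blue (A.swapRight t) := by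
        simp [wt, hHblue _ hlH, hHblue _ (hr ▸ hγH)]
      have := hγ.cweight_succ_of_eq_swapRight_of_mem hr hlH (hr ▸ hγH) hw
      omega
    have hw := hγ.cweight_succ_of_eq_swapRight_of_notMem hr hlH (blue := blue)
    refine Or.inr ⟨hr, hlH, ?_⟩
    unfold wt at hw
    split_ifs at hw with hb
    · omega
    · simpa using hb
  have := hγ.cweight_succ_of_ne hl hr (blue := blue)
  omega

end IsKth

end Rank

end AllowableSeq

open AllowableSeq

theorem Hi_up_change_balanced_general (n δ : ℕ) (A : AllowableSeq n) (blue : Fin n → Bool)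
    (Γ : ℤ → Fin n)
    (H : Finset (Fin n))
    (hH : H = Finset.univ.filter (fun x => blue x = true ∧
      A.pos 0 (mirror Γ 0) ≤ A.pos 0 x))
    (i : ℕ)
    (γ : ℤ → Fin n) (hγ : A.IsKth H i γ)
    (t : ℤ) (ht0 : 0 ≤ t) (htN : t < (n.choose 2 : ℤ))
    (h1 : A.cweight blue γ t = (δ : ℤ) - 1) (h2 : A.cweight blue γ (t+1) = (δ : ℤ)) :
    ∃ f x : Fin n, f ∈ H ∧ blue x = false ∧ A.SwapsAt t f x ∧
      (A.pos t f : ℕ) = (A.pos t x : ℕ) + 1 ∧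
      A.BalancedSwap blue (δ : ℤ) t f x ∧
      (H.filter (fun y =>
        (A.pos t y : ℕ) < min (A.pos t f : ℕ) (A.pos t x : ℕ))).card = i - 1 := by
  classical
  have hmemH : ∀ y, y ∈ H ↔ blue y = true ∧ A.pos 0 (mirror Γ 0) ≤ A.pos 0 y := by
    simp [hH]
  rcases hγ.swap_of_cweight_succ_eq_add_one (t := t) (fun y hy => ((hmemH y).mp hy).1)
    (by omega) with ⟨hl, hrH, hrblue⟩ | ⟨hr, hlH, hlred⟩
  · -- the two blue points already had this order at time 0, so both lie in `H`
    exact absurd ((hmemH _).mpr ⟨hrblue, ((hmemH _).mp (hl ▸ (hγ t).1)).2.trans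
      (A.pos_zero_swapLeft_lt ht0 htN).le⟩) hrH
  · have hrH : A.swapRight t ∈ H := hr ▸ (hγ t).1
    have hmin : min (A.pos t (A.swapRight t) : ℕ) (A.pos t (A.swapLeft t)) =
        A.pos t (A.swapLeft t) := by
      rw [A.val_pos_swapRight]; omega
    have hweight : ∑ x ∈ A.leftOf t (A.swapLeft t), wt blue x = δ := by
      have hsplit := A.cweight_eq_sum_leftOf blue γ t
      rw [hr, A.leftOf_swapRight, Finset.sum_insert (A.swapLeft_notMem_leftOf_swapLeft t), h1,
        wt, if_neg (by simp [hlred])] at hsplit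
      omega
    refine ⟨A.swapRight t, A.swapLeft t, hrH, hlred, A.swapsAt_swapRight_swapLeft t,
      A.val_pos_swapRight t, ⟨A.swapsAt_swapRight_swapLeft t, by simp [hlred, (hmemH _).mp hrH],
      ?_⟩, ?_⟩
    · rw [hmin, ← A.sum_leftOf_eq_sum_ite, hweight]
    · rw [hmin, A.filter_val_pos_lt_eq_inter_leftOf, hγ.card_inter_leftOf_swapLeft hr hlH]

theorem Hi_up_change_balanced (n b r δ : ℕ) (A : AllowableSeq n) (blue : Fin n → Bool)
    (hn : n = b + r)
    (hb : (Finset.univ.filter (fun x => blue x = true)).card = b)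
    (hr : (Finset.univ.filter (fun x => blue x = false)).card = r)
    (hbr : b = r + 2 * δ)
    (Γ : ℤ → Fin n) (hΓblue : ∀ t : ℤ, blue (Γ t) = true)
    (hΓ : A.IsMaxBorder blue (δ : ℤ) Γ)
    (H : Finset (Fin n))
    (hH : H = Finset.univ.filter (fun x => blue x = true ∧
      A.pos 0 (mirror Γ 0) ≤ A.pos 0 x))
    (i : ℕ) (hi1 : 1 ≤ i) (hi2 : i ≤ H.card)
    (γ : ℤ → Fin n) (hγ : A.IsKth H i γ)
    (t : ℤ) (ht0 : 0 ≤ t) (htN : t < (n.choose 2 : ℤ))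
    (h1 : A.cweight blue γ t = (δ : ℤ) - 1) (h2 : A.cweight blue γ (t+1) = (δ : ℤ)) :
    ∃ f x : Fin n, f ∈ H ∧ blue x = false ∧ A.SwapsAt t f x ∧
      (A.pos t f : ℕ) = (A.pos t x : ℕ) + 1 ∧
      A.BalancedSwap blue (δ : ℤ) t f x ∧
      (H.filter (fun y =>
        (A.pos t y : ℕ) < min (A.pos t f : ℕ) (A.pos t x : ℕ))).card = i - 1 :=
  Hi_up_change_balanced_general n δ A blue Γ H hH i γ hγ t ht0 htN h1 h2
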